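/- arXiv:1701.08896 — 4 statements merged into one kernel-verified Lean document; each statement's English description precedes it below -/
import Mathlib

section
/- Let β > 0, γ⁺ ≥ 0, and D be a diagonal n×n matrix with diagonal entries d_i > 0. Consider the (n+1)×(n+1) symmetric block matrix M = [[β𝟙𝟙ᵀ + D, β𝟙],[β𝟙ᵀ, γ⁺β]]. If γ⁺ ≥ 1 − (1 + Σ_{i=1}^n β/d_i)⁻¹, then M is positive semidefinite. -/
/-!
The top-left block `A = β𝟙𝟙ᵀ + D` is positive definite, so `M ⪰ 0` iff its Schur complement
`γ⁺β − β²𝟙ᵀA⁻¹𝟙` is nonnegative. Since `A (D⁻¹𝟙) = (1 + Σᵢ β/dᵢ) 𝟙`, the vector `A⁻¹𝟙` is explicit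
and `β𝟙ᵀA⁻¹𝟙 = 1 − (1 + Σᵢ β/dᵢ)⁻¹`.
-/

open Matrix

namespace Matrix

variable {ι κ : Type*} [Fintype ι]

theorem posSemidef_const_of_nonneg [Fintype κ] {c : ℝ} (hc : 0 ≤ c) :
    (of fun (_ _ : κ) => c).PosSemidef := by
  have h : (of fun (_ _ : κ) => c) = c • vecMulVec 1 (star 1) := by ext; simp
  rw [h]
  exact (posSemidef_vecMulVec_self_star 1).smul hc

theorem one_add_sum_div_pos {β : ℝ} (hβ : 0 ≤ β) {d : ι → ℝ} (hd : ∀ i, 0 < d i) :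
    0 < 1 + ∑ i, β / d i :=
  add_pos_of_pos_of_nonneg one_pos (Finset.sum_nonneg fun i _ => div_nonneg hβ (hd i).le)

variable [DecidableEq ι]

theorem posDef_const_add_diagonal {β : ℝ} (hβ : 0 ≤ β) {d : ι → ℝ} (hd : ∀ i, 0 < d i) :
    (of (fun (_ _ : ι) => β) + diagonal d).PosDef :=
  PosDef.posSemidef_add (posSemidef_const_of_nonneg hβ) (PosDef.diagonal hd)

theorem const_add_diagonal_mulVec_inv {β : ℝ} {d : ι → ℝ} (hd : ∀ i, d i ≠ 0) :
    (of (fun (_ _ : ι) => β) + diagonal d) *ᵥ (fun i => (d i)⁻¹) =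
      fun _ => 1 + ∑ i, β / d i := by
  ext i
  rw [add_mulVec, Pi.add_apply, mulVec_diagonal, mul_inv_cancel₀ (hd i), add_comm]
  simp [mulVec, dotProduct, div_eq_mul_inv]

theorem inv_const_add_diagonal_mulVec_one {β : ℝ} (hβ : 0 ≤ β) {d : ι → ℝ} (hd : ∀ i, 0 < d i) :
    (of (fun (_ _ : ι) => β) + diagonal d)⁻¹ *ᵥ 1 = (1 + ∑ j, β / d j)⁻¹ • fun i => (d i)⁻¹ := by
  have : Invertible (of (fun (_ _ : ι) => β) + diagonal d) :=
    (posDef_const_add_diagonal hβ hd).isUnit.invertible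
  have hS := one_add_sum_div_pos hβ hd
  apply inv_mulVec_eq_vec
  rw [mulVec_smul, const_add_diagonal_mulVec_inv fun i => (hd i).ne']
  ext i
  simp [hS.ne']

theorem conjTranspose_const_mul_inv_const_add_diagonal_mul_const {β : ℝ} (hβ : 0 ≤ β) {d : ι → ℝ}
    (hd : ∀ i, 0 < d i) :
    (of fun (_ : ι) (_ : κ) => β)ᴴ * (of (fun (_ _ : ι) => β) + diagonal d)⁻¹ *
      (of fun (_ : ι) (_ : κ) => β) =
      of fun _ _ => β * (1 - (1 + ∑ i, β / d i)⁻¹) := by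
  have hS := one_add_sum_div_pos hβ hd
  have hrow := congrFun (inv_const_add_diagonal_mulVec_one hβ hd)
  simp only [mulVec, dotProduct, Pi.one_apply, mul_one, Pi.smul_apply, smul_eq_mul] at hrow
  ext k k'
  rw [Matrix.mul_assoc]
  simp only [mul_apply, conjTranspose_apply, of_apply, star_trivial, ← Finset.sum_mul, hrow]
  set S := ∑ i, β / d i
  calc ∑ i, β * ((1 + S)⁻¹ * (d i)⁻¹ * β) = β * (1 + S)⁻¹ * S := by
        rw [Finset.mul_sum]; exact Finset.sum_congr rfl fun i _ => by ring
    _ = β * (1 - (1 + S)⁻¹) := by field_simp; ring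

theorem posSemidef_fromBlocks_const_add_diagonal [Fintype κ] {β c : ℝ} (hβ : 0 ≤ β) {d : ι → ℝ}
    (hd : ∀ i, 0 < d i) (hc : β * (1 - (1 + ∑ i, β / d i)⁻¹) ≤ c) :
    (fromBlocks (of (fun (_ _ : ι) => β) + diagonal d) (of fun (_ : ι) (_ : κ) => β)
      (of fun (_ : κ) (_ : ι) => β) (of fun (_ _ : κ) => c)).PosSemidef := by
  have hA := posDef_const_add_diagonal hβ hd
  have : Invertible (of (fun (_ _ : ι) => β) + diagonal d) := hA.isUnit.invertible
  have hB : (of fun (_ : κ) (_ : ι) => β) = (of fun (_ : ι) (_ : κ) => β)ᴴ := by ext; simp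
  rw [hB, PosDef.fromBlocks₁₁ _ _ hA,
    conjTranspose_const_mul_inv_const_add_diagonal_mul_const hβ hd, of_sub_of]
  exact posSemidef_const_of_nonneg (sub_nonneg.2 hc)

end Matrix

theorem stmt4_general {n : ℕ} (β γplus : ℝ) (hβ : 0 < β)
    (d : Fin n → ℝ) (hd : ∀ i, 0 < d i)
    (hcond : γplus ≥ 1 - (1 + ∑ i, β / d i)⁻¹) :
    (Matrix.fromBlocks
      (Matrix.of (fun (_ _ : Fin n) => β) + Matrix.diagonal d)
      (Matrix.of (fun (_ : Fin n) (_ : Unit) => β))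
      (Matrix.of (fun (_ : Unit) (_ : Fin n) => β))
      (Matrix.of (fun (_ _ : Unit) => γplus * β))).PosSemidef :=
  posSemidef_fromBlocks_const_add_diagonal hβ.le hd <| by
    rw [mul_comm γplus]; exact mul_le_mul_of_nonneg_left hcond hβ.le

/-- The block matrix `M = [[β𝟙𝟙ᵀ + D, β𝟙],[β𝟙ᵀ, γ⁺β]]` is positive semidefinite
whenever `γ⁺ ≥ 1 − (1 + Σᵢ β/dᵢ)⁻¹`, where `D = diag(d)` with `dᵢ > 0` and `β > 0`. -/
theorem stmt4 {n : ℕ} (β γplus : ℝ) (hβ : 0 < β) (hγ : 0 ≤ γplus)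
    (d : Fin n → ℝ) (hd : ∀ i, 0 < d i)
    (hcond : γplus ≥ 1 - (1 + ∑ i, β / d i)⁻¹) :
    (Matrix.fromBlocks
      (Matrix.of (fun (_ _ : Fin n) => β) + Matrix.diagonal d)
      (Matrix.of (fun (_ : Fin n) (_ : Unit) => β))
      (Matrix.of (fun (_ : Unit) (_ : Fin n) => β))
      (Matrix.of (fun (_ _ : Unit) => γplus * β))).PosSemidef :=
  stmt4_general β γplus hβ d hd hcond
end

section
/- In the aggregated Cournot equilibrium with n firms (inverse demand p(d) = α − (β/n)d, linear costs C_f, α ≥ (1+n)max_f C_f − n·C̄), the equilibrium social welfare equals (n²(2 + n)/(2(1 + n)²β))·[(α − C̄)² + (2(1 + n)²/(2 + n))·σ_C²], where C̄ and σ_C² are the mean and variance of the marginal costs. -/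
/-- The equilibrium social welfare of the aggregated Cournot market equals
`(n²(2+n)/(2(1+n)²β))·[(α − C̄)² + (2(1+n)²/(2+n))σ_C²]`. -/
theorem stmt12 {n : ℕ} (hn : 1 ≤ n) (α β : ℝ) (hβ : 0 < β)
    (C : Fin n → ℝ) (hC : ∀ f, 0 < C f)
    (hα : ∀ f, (1 + (n : ℝ)) * C f - (n : ℝ) * ((1 / (n : ℝ)) * ∑ g, C g) ≤ α) :
    let Cbar : ℝ := (1 / (n : ℝ)) * ∑ g, C g
    let σsq : ℝ := (1 / (n : ℝ)) * ∑ g, (C g - Cbar) ^ 2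
    let qstar : Fin n → ℝ :=
      fun f => ((n : ℝ) / ((1 + (n : ℝ)) * β)) * (α - Cbar - (1 + (n : ℝ)) * (C f - Cbar))
    (∫ w in (0:ℝ)..(∑ f, qstar f), (α - (β / (n : ℝ)) * w)) - ∑ f, C f * qstar f
      = ((n : ℝ) ^ 2 * (2 + (n : ℝ)) / (2 * (1 + (n : ℝ)) ^ 2 * β)) *
          ((α - Cbar) ^ 2 + (2 * (1 + (n : ℝ)) ^ 2 / (2 + (n : ℝ))) * σsq) := by
  intro Cbar σsq qstar
  have hn0 : (n : ℝ) ≠ 0 := by positivity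
  have hn1 : (1 : ℝ) + n ≠ 0 := by positivity
  have hn2 : (2 : ℝ) + n ≠ 0 := by positivity
  have hβ0 : β ≠ 0 := ne_of_gt hβ
  set S : ℝ := ∑ g, C g with hS
  set S2 : ℝ := ∑ g, (C g) ^ 2 with hS2
  set k : ℝ := (n : ℝ) / ((1 + (n : ℝ)) * β) with hk
  have hCbar : Cbar = (1 / (n : ℝ)) * S := rfl
  have hSn : S = (n : ℝ) * Cbar := by rw [hCbar]; field_simp
  have hsum1 : ∀ a b : ℝ, (∑ f, (a - b * C f)) = (n : ℝ) * a - b * S := by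
    intro a b
    rw [Finset.sum_sub_distrib, Finset.sum_const, ← Finset.mul_sum, Finset.card_fin,
      nsmul_eq_mul, ← hS]
  have hsum2 : ∀ a b : ℝ, (∑ f, C f * (a - b * C f)) = a * S - b * S2 := by
    intro a b
    have e : ∀ f, C f * (a - b * C f) = a * C f - b * (C f) ^ 2 := fun f => by ring
    rw [Finset.sum_congr rfl fun f _ => e f, Finset.sum_sub_distrib, ← Finset.mul_sum,
      ← Finset.mul_sum, ← hS, ← hS2]
  have hσ : σsq = (1 / (n : ℝ)) * (S2 - 2 * Cbar * S + n * Cbar ^ 2) := by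
    have e : ∀ g, (C g - Cbar) ^ 2 = ((C g) ^ 2 + Cbar ^ 2) - (2 * Cbar) * C g :=
      fun g => by ring
    show (1 / (n : ℝ)) * ∑ g, (C g - Cbar) ^ 2 = _
    rw [Finset.sum_congr rfl fun g _ => e g, Finset.sum_sub_distrib, Finset.sum_add_distrib,
      ← Finset.mul_sum, Finset.sum_const, Finset.card_fin, nsmul_eq_mul, ← hS, ← hS2]
    ring
  have hq : ∀ f, qstar f = k * ((α - Cbar + (1 + n) * Cbar) - (1 + n) * C f) := by
    intro f; simp only [qstar, hk]; ring
  have hQ : (∑ f, qstar f) = k * ((n : ℝ) * (α - Cbar + (1 + n) * Cbar) - (1 + n) * S) := by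
    rw [Finset.sum_congr rfl fun f _ => hq f, ← Finset.mul_sum, hsum1]
  have hCq : (∑ f, C f * qstar f)
      = k * ((α - Cbar + (1 + n) * Cbar) * S - (1 + n) * S2) := by
    have e : ∀ f, C f * qstar f = k * (C f * ((α - Cbar + (1 + n) * Cbar) - (1 + n) * C f)) :=
      fun f => by rw [hq f]; ring
    rw [Finset.sum_congr rfl fun f _ => e f, ← Finset.mul_sum, hsum2]
  have hint : ∀ Q : ℝ, (∫ w in (0:ℝ)..Q, (α - (β / (n : ℝ)) * w))
      = α * Q - (β / (n : ℝ)) * (Q ^ 2 / 2) := by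
    intro Q
    rw [intervalIntegral.integral_sub (intervalIntegrable_const)
      ((intervalIntegral.intervalIntegrable_id).const_mul _),
      intervalIntegral.integral_const_mul, integral_id, intervalIntegral.integral_const]
    simp
    ring
  rw [hint, hQ, hCq, hσ, hk, hCbar, hSn, hCbar]
  field_simp
  ring
end

section
/- With q_f = (1/(2β))[α − C̄ − (1 + κ)(C_f − C̄)] and r_f = (κ/β)(C_f − C̄) for f = 1,...,n, the total social welfare Σ_f [∫₀^{q_f + r_f}(α − βw)dw − C_f q_f] equals (3n/(8β))·[(α − C̄)² + σ_C² + (1/3)κ(6 − κ)σ_C²], where σ_C² = (1/n)Σ_f (C_f − C̄)² and C̄ = (1/n)Σ_f C_f. Consequently this welfare is maximized over κ ∈ ℝ at κ = 3. -/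
open Finset
open scoped BigOperators

/-! The equilibrium output `q_f + r_f` and the production `q_f` of each market are affine in the
cost deviation `C_f − C̄`, so each market's welfare is a quadratic `A + B (C_f − C̄) + D (C_f − C̄)²`.
Summing over markets, the linear terms cancel because deviations from the mean sum to zero, and the
quadratic terms add up to `n σ_C²`. The resulting coefficient of `σ_C²` is `3 + κ(6 − κ) = 12 − (κ − 3)²`,
which is largest at `κ = 3`. -/

theorem integral_const_sub_mul_id (α β x : ℝ) :
    ∫ w in (0:ℝ)..x, (α - β * w) = α * x - β * (x ^ 2 / 2) := by
  rw [intervalIntegral.integral_sub intervalIntegrable_const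
      ((continuous_const_mul β).intervalIntegrable _ _),
    intervalIntegral.integral_const, intervalIntegral.integral_const_mul, integral_id,
    smul_eq_mul]
  ring

namespace Finset

variable {ι K : Type*} [Field K] [CharZero K]

theorem sum_sub_expect (s : Finset ι) (x : ι → K) :
    ∑ i ∈ s, (x i - 𝔼 j ∈ s, x j) = 0 := by
  rw [sum_sub_distrib, sum_const, nsmul_eq_mul, card_mul_expect, sub_self]

end Finset

theorem one_div_card_mul_sum_eq_expect {n : ℕ} (x : Fin n → ℝ) :
    (1 / (n : ℝ)) * ∑ i, x i = 𝔼 i, x i := by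
  rw [Fintype.expect_eq_sum_div_card, Fintype.card_fin, one_div_mul_eq_div]

theorem welfare_at_equilibrium (α β cbar c κ : ℝ) (hβ : β ≠ 0) :
    (∫ w in (0:ℝ)..((1 / (2 * β)) * (α - cbar - (1 + κ) * (c - cbar)) + (κ / β) * (c - cbar)),
        (α - β * w)) - c * ((1 / (2 * β)) * (α - cbar - (1 + κ) * (c - cbar)))
      = 3 * (α - cbar) ^ 2 / (8 * β) + ((κ - 3) * (α - cbar) / 4 + cbar * κ) / β * (c - cbar)
        + (3 + κ * (6 - κ)) / (8 * β) * (c - cbar) ^ 2 := by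
  rw [integral_const_sub_mul_id]
  field_simp
  ring

theorem mul_six_sub_le_nine (κ : ℝ) : κ * (6 - κ) ≤ 9 := by
  nlinarith [sq_nonneg (κ - 3)]

theorem stmt14_general {n : ℕ} (α β : ℝ) (hβ : 0 < β) (C : Fin n → ℝ) :
    let Cbar : ℝ := (1 / (n : ℝ)) * ∑ g, C g
    let σsq : ℝ := (1 / (n : ℝ)) * ∑ g, (C g - Cbar) ^ 2
    let q : ℝ → Fin n → ℝ :=
      fun κ f => (1 / (2 * β)) * (α - Cbar - (1 + κ) * (C f - Cbar))
    let r : ℝ → Fin n → ℝ := fun κ f => (κ / β) * (C f - Cbar)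
    let W : ℝ → ℝ :=
      fun κ => 3 * (n : ℝ) / (8 * β) *
        ((α - Cbar) ^ 2 + σsq + (1 / 3) * (κ * (6 - κ)) * σsq)
    (∀ κ : ℝ,
      ∑ f, ((∫ w in (0:ℝ)..(q κ f + r κ f), (α - β * w)) - C f * q κ f) = W κ) ∧
    ∀ κ : ℝ, W κ ≤ W 3 := by
  intro Cbar σsq q r W
  have hCbar : Cbar = 𝔼 g, C g := one_div_card_mul_sum_eq_expect C
  have hσsq : σsq = 𝔼 g, (C g - Cbar) ^ 2 := one_div_card_mul_sum_eq_expect _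
  have hσ : 0 ≤ σsq := hσsq ▸ expect_nonneg fun g _ => sq_nonneg _
  have hsumsq : ∑ g, (C g - Cbar) ^ 2 = n * σsq := by
    simpa [hσsq] using (Fintype.card_mul_expect fun g => (C g - Cbar) ^ 2).symm
  refine ⟨fun κ => ?_, fun κ => ?_⟩
  · simp only [q, r, welfare_at_equilibrium α β Cbar _ κ hβ.ne', sum_add_distrib, ← mul_sum,
      sum_const, card_univ, Fintype.card_fin, nsmul_eq_mul]
    rw [hCbar, sum_sub_expect, ← hCbar, hsumsq]
    simp only [W]
    field_simp
    ring
  · have hpeak := mul_le_mul_of_nonneg_right (mul_six_sub_le_nine κ) hσ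
    exact mul_le_mul_of_nonneg_left (by norm_num; linarith) (by positivity)

/-- Closed-form social welfare at the networked Cournot equilibrium:
`Σ_f [∫₀^{q_f+r_f}(α − βw)dw − C_f q_f] = (3n/(8β))[(α−C̄)² + σ_C² + (1/3)κ(6−κ)σ_C²]`,
and this welfare is maximized over `κ ∈ ℝ` at `κ = 3`. -/
theorem stmt14 {n : ℕ} (hn : 1 ≤ n) (α β : ℝ) (hβ : 0 < β) (C : Fin n → ℝ) :
    let Cbar : ℝ := (1 / (n : ℝ)) * ∑ g, C g
    let σsq : ℝ := (1 / (n : ℝ)) * ∑ g, (C g - Cbar) ^ 2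
    let q : ℝ → Fin n → ℝ :=
      fun κ f => (1 / (2 * β)) * (α - Cbar - (1 + κ) * (C f - Cbar))
    let r : ℝ → Fin n → ℝ := fun κ f => (κ / β) * (C f - Cbar)
    let W : ℝ → ℝ :=
      fun κ => 3 * (n : ℝ) / (8 * β) *
        ((α - Cbar) ^ 2 + σsq + (1 / 3) * (κ * (6 - κ)) * σsq)
    (∀ κ : ℝ,
      ∑ f, ((∫ w in (0:ℝ)..(q κ f + r κ f), (α - β * w)) - C f * q κ f) = W κ) ∧
    ∀ κ : ℝ, W κ ≤ W 3 :=
  stmt14_general α β hβ C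
end

section
/- With the equilibrium quantities q_f = (1/(2β))[α − C̄ − (1 + κ)(C_f − C̄)] and r_f = (κ/β)(C_f − C̄): the aggregate consumer surplus Σ_f (β/2)(q_f + r_f)² equals (1/(8β))[n(α − C̄)² + (κ − 1)²·n·σ_C²]; the aggregate producer surplus Σ_f (α − C_f − β(q_f + r_f))·q_f equals (1/(4β))[n(α − C̄)² + (κ + 1)²·n·σ_C²]; and the merchandising surplus −β·Σ_f (q_f + r_f)·r_f equals −(1/(2β))κ(κ − 1)·n·σ_C². -/
/-!
Write `a = α - C̄` and `x_f = C_f - C̄`. Then `q_f + r_f = (a + (κ - 1) x_f) / (2β)` and the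
price-cost margin `α - C_f - β (q_f + r_f)` equals `β q_f = (a - (κ + 1) x_f) / 2`, so each
per-market surplus is a quadratic in `x_f`. Summing over firms, the linear terms vanish because
the deviations from the mean cost sum to zero, and the quadratic terms give `n σ_C²`.
-/

open Finset

section MeanDeviation

variable {ι : Type*}

lemma card_mul_mean_eq_sum {K : Type*} [Field K] [CharZero K] (s : Finset ι) (f : ι → K) :
    (#s : K) * ((1 / (#s : K)) * ∑ i ∈ s, f i) = ∑ i ∈ s, f i := by
  rcases s.eq_empty_or_nonempty with rfl | hs
  · simp
  · have : (#s : K) ≠ 0 := by exact_mod_cast hs.card_ne_zero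
    field_simp

lemma sum_sub_mean_eq_zero {K : Type*} [Field K] [CharZero K] (s : Finset ι) (f : ι → K) :
    ∑ i ∈ s, (f i - (1 / (#s : K)) * ∑ j ∈ s, f j) = 0 := by
  rw [sum_sub_distrib, sum_const, nsmul_eq_mul, card_mul_mean_eq_sum, sub_self]

variable {R : Type*} [CommRing R] {s : Finset ι} {x : ι → R}

lemma sum_add_mul_sq_of_sum_eq_zero (hx : ∑ i ∈ s, x i = 0) (a b : R) :
    ∑ i ∈ s, (a + b * x i) ^ 2 = #s * a ^ 2 + b ^ 2 * ∑ i ∈ s, x i ^ 2 := by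
  have expand : ∀ i, (a + b * x i) ^ 2 = a ^ 2 + 2 * a * b * x i + b ^ 2 * x i ^ 2 :=
    fun i => by ring
  simp only [expand, sum_add_distrib, sum_const, nsmul_eq_mul, ← mul_sum, hx, mul_zero,
    add_zero]

lemma sum_add_mul_mul_of_sum_eq_zero (hx : ∑ i ∈ s, x i = 0) (a b : R) :
    ∑ i ∈ s, (a + b * x i) * x i = b * ∑ i ∈ s, x i ^ 2 := by
  have expand : ∀ i, (a + b * x i) * x i = a * x i + b * x i ^ 2 := fun i => by ring
  simp only [expand, sum_add_distrib, ← mul_sum, hx, mul_zero, zero_add]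

end MeanDeviation

section CournotSurplus

variable {ι : Type*} (α β κ m : ℝ)

/-- The paper's `q_f`, for a firm with marginal cost `c` when the mean marginal cost is `m`. -/
noncomputable def equilibriumOutput (c : ℝ) : ℝ := (1 / (2 * β)) * (α - m - (1 + κ) * (c - m))

/-- The paper's `r_f`, for a firm with marginal cost `c` when the mean marginal cost is `m`. -/
noncomputable def equilibriumMerchandise (c : ℝ) : ℝ := (κ / β) * (c - m)

variable {α β κ m}

lemma equilibriumOutput_add_merchandise (hβ : β ≠ 0) (c : ℝ) :
    equilibriumOutput α β κ m c + equilibriumMerchandise β κ m c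
      = (1 / (2 * β)) * (α - m + (κ - 1) * (c - m)) := by
  unfold equilibriumOutput equilibriumMerchandise
  field_simp
  ring

lemma margin_eq_mul_equilibriumOutput (hβ : β ≠ 0) (c : ℝ) :
    α - c - β * (equilibriumOutput α β κ m c + equilibriumMerchandise β κ m c)
      = β * equilibriumOutput α β κ m c := by
  rw [equilibriumOutput_add_merchandise hβ]
  unfold equilibriumOutput
  field_simp
  ring

variable (s : Finset ι) {C : ι → ℝ}

lemma sum_consumerSurplus (hβ : β ≠ 0) (hC : ∑ i ∈ s, (C i - m) = 0) :
    ∑ i ∈ s, (β / 2) * (equilibriumOutput α β κ m (C i) + equilibriumMerchandise β κ m (C i)) ^ 2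
      = (1 / (8 * β)) * (#s * (α - m) ^ 2 + (κ - 1) ^ 2 * ∑ i ∈ s, (C i - m) ^ 2) := by
  have term : ∀ i, (β / 2) * (equilibriumOutput α β κ m (C i)
      + equilibriumMerchandise β κ m (C i)) ^ 2
        = (1 / (8 * β)) * (α - m + (κ - 1) * (C i - m)) ^ 2 := fun i => by
    rw [equilibriumOutput_add_merchandise hβ]
    field_simp
    ring
  rw [sum_congr rfl fun i _ => term i, ← mul_sum, sum_add_mul_sq_of_sum_eq_zero hC]

lemma sum_producerSurplus (hβ : β ≠ 0) (hC : ∑ i ∈ s, (C i - m) = 0) :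
    ∑ i ∈ s, (α - C i - β * (equilibriumOutput α β κ m (C i)
      + equilibriumMerchandise β κ m (C i))) * equilibriumOutput α β κ m (C i)
      = (1 / (4 * β)) * (#s * (α - m) ^ 2 + (κ + 1) ^ 2 * ∑ i ∈ s, (C i - m) ^ 2) := by
  have term : ∀ i, (α - C i - β * (equilibriumOutput α β κ m (C i)
      + equilibriumMerchandise β κ m (C i))) * equilibriumOutput α β κ m (C i)
        = (1 / (4 * β)) * (α - m + -(κ + 1) * (C i - m)) ^ 2 := fun i => by
    rw [margin_eq_mul_equilibriumOutput hβ]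
    unfold equilibriumOutput
    field_simp
    ring
  rw [sum_congr rfl fun i _ => term i, ← mul_sum, sum_add_mul_sq_of_sum_eq_zero hC, neg_sq]

lemma sum_merchandisingSurplus (hβ : β ≠ 0) (hC : ∑ i ∈ s, (C i - m) = 0) :
    -(β * ∑ i ∈ s, (equilibriumOutput α β κ m (C i) + equilibriumMerchandise β κ m (C i))
      * equilibriumMerchandise β κ m (C i))
      = -(1 / (2 * β)) * (κ * (κ - 1)) * ∑ i ∈ s, (C i - m) ^ 2 := by
  have term : ∀ i, (equilibriumOutput α β κ m (C i) + equilibriumMerchandise β κ m (C i))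
      * equilibriumMerchandise β κ m (C i)
        = (κ / (2 * β ^ 2)) * ((α - m + (κ - 1) * (C i - m)) * (C i - m)) := fun i => by
    rw [equilibriumOutput_add_merchandise hβ]
    unfold equilibriumMerchandise
    field_simp
  rw [sum_congr rfl fun i _ => term i, ← mul_sum, sum_add_mul_mul_of_sum_eq_zero hC]
  field_simp

end CournotSurplus

/-- Surplus decomposition at the networked Cournot equilibrium: formulas for
aggregate consumer surplus, aggregate producer surplus, and merchandising surplus. -/
theorem stmt15 {n : ℕ} (α β κ : ℝ) (hβ : 0 < β) (C : Fin n → ℝ) :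
    let Cbar : ℝ := (1 / (n : ℝ)) * ∑ g, C g
    let σsq : ℝ := (1 / (n : ℝ)) * ∑ g, (C g - Cbar) ^ 2
    let q : Fin n → ℝ := fun f => (1 / (2 * β)) * (α - Cbar - (1 + κ) * (C f - Cbar))
    let r : Fin n → ℝ := fun f => (κ / β) * (C f - Cbar)
    (∑ f, (β / 2) * (q f + r f) ^ 2
        = (1 / (8 * β)) * ((n : ℝ) * (α - Cbar) ^ 2 + (κ - 1) ^ 2 * (n : ℝ) * σsq)) ∧
    (∑ f, (α - C f - β * (q f + r f)) * q f
        = (1 / (4 * β)) * ((n : ℝ) * (α - Cbar) ^ 2 + (κ + 1) ^ 2 * (n : ℝ) * σsq)) ∧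
    (-(β * ∑ f, (q f + r f) * r f)
        = -(1 / (2 * β)) * (κ * (κ - 1)) * (n : ℝ) * σsq) := by
  intro Cbar σsq q r
  have hC : ∑ f, (C f - Cbar) = 0 := by simpa only [card_fin] using sum_sub_mean_eq_zero univ C
  have hσ : ∑ f, (C f - Cbar) ^ 2 = n * σsq := by
    simpa only [card_fin] using (card_mul_mean_eq_sum univ fun f => (C f - Cbar) ^ 2).symm
  refine ⟨(sum_consumerSurplus univ hβ.ne' hC).trans ?_,
    (sum_producerSurplus univ hβ.ne' hC).trans ?_,
    (sum_merchandisingSurplus univ hβ.ne' hC).trans ?_⟩ <;>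
    simp only [card_fin, hσ] <;> ring
end
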